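/- arXiv:0908.3316 — 2 statements merged into one kernel-verified Lean document; each statement's English description precedes it below -/
import Mathlib

section
/- Let f, g : [0,1] → [0,1] be decreasing Möbius maps, neither onto, with Im(f) ∪ Im(g) = [0,1] and {o(f∘g), o(g∘f)} = {0,1} (attracting fixed points of the compositions). Then the orbit of every x ∈ (0,1) under the semigroup generated by f and g is dense in [0,1]. -/
/-!
Normalise to `o(f ∘ g) = 0` (otherwise swap `f` and `g`); then `f 1 = 0` and `g 0 = 1`. An
increasing Möbius map `h` with an attracting fixed point at `0` and `h 1 < 1` has no fixed point
in `(0, 1]`, so `f ∘ g` lies below the diagonal there and, conjugating by `f`, `g ∘ f` lies above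
it on `[0, 1)`.

The closure `S` of an orbit is closed, invariant and accumulates at `0` and `1`. If `S` missed a
point, it would have a gap `(u, v)` with `0 < u < v < 1`. Its preimage under `f` (if `v ≤ f 0`) or
under `g` (if `f 0 ≤ u`) lies in another gap; as `f` and `g` preserve cross ratios but map `[0, 1]`
onto proper subintervals, the cross ratio `[0, u, v, 1]` grows by at least `c (v - u)`, where
`c = min (1 - f 0) (g 1) > 0`. Along the resulting sequence of gaps the cross ratio stays above
its initial value, which keeps the gaps in a fixed compact subinterval of `(0, 1)`. There they
have a uniform width, so the cross ratio grows without bound, which is impossible for gaps in a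
compact subinterval.
-/

def IsMobiusOn (f : ℝ → ℝ) : Prop :=
  ∃ A B C D : ℝ, A * D - B * C ≠ 0 ∧
    ∀ x ∈ Set.Icc (0:ℝ) 1, C * x + D ≠ 0 ∧ f x = (A * x + B) / (C * x + D)

def IsAttractingFixedPt (f : ℝ → ℝ) (θ : ℝ) : Prop :=
  θ ∈ Set.Icc (0:ℝ) 1 ∧ f θ = θ ∧ ∃ ε > 0, ∀ x ∈ Set.Icc (0:ℝ) 1, |x - θ| < ε →
    Filter.Tendsto (fun n => f^[n] x) Filter.atTop (nhds θ)

open Set Filter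

noncomputable def crossRatio (a b u v : ℝ) : ℝ := (v - a) * (b - u) / ((u - a) * (b - v))

theorem crossRatio_comm (a b u v : ℝ) : crossRatio a b u v = crossRatio b a v u := by
  unfold crossRatio; congr 1 <;> ring

theorem crossRatio_le_crossRatio {a b u v x y : ℝ} (hay : a < y) (hyu : y ≤ u) (huv : u < v)
    (hvx : v ≤ x) (hxb : x < b) : crossRatio a b u v ≤ crossRatio a b y x := by
  unfold crossRatio
  apply div_le_div₀ (by nlinarith)
    (mul_le_mul (by linarith) (by linarith) (by linarith) (by linarith)) (by nlinarith)
    (mul_le_mul (by linarith) (by linarith) (by linarith) (by linarith))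

theorem crossRatio_zero_one_mul_le {a b u v : ℝ} (ha : 0 ≤ a) (hau : a < u) (huv : u < v)
    (hvb : v < b) (hb : b ≤ 1) :
    crossRatio 0 1 u v * (1 + (a + (1 - b)) * (v - u)) ≤ crossRatio a b u v := by
  have hleft : v * (u - a) * (1 + a * (v - u)) ≤ u * (v - a) := by
    nlinarith [mul_nonneg (mul_nonneg ha (by linarith : (0:ℝ) ≤ v - u))
      (by nlinarith : (0:ℝ) ≤ 1 - v * (u - a))]
  have hright : (1 - u) * (b - v) * (1 + (1 - b) * (v - u)) ≤ (1 - v) * (b - u) := by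
    nlinarith [mul_nonneg (mul_nonneg (by linarith : (0:ℝ) ≤ 1 - b) (by linarith : (0:ℝ) ≤ v - u))
      (by nlinarith : (0:ℝ) ≤ 1 - (1 - u) * (b - v))]
  have hfactor : 1 + (a + (1 - b)) * (v - u) ≤ (1 + a * (v - u)) * (1 + (1 - b) * (v - u)) := by
    nlinarith [mul_nonneg (mul_nonneg ha (by linarith : (0:ℝ) ≤ 1 - b)) (sq_nonneg (v - u))]
  have hw : 0 ≤ v * (u - a) * ((1 - u) * (b - v)) :=
    mul_nonneg (mul_nonneg (by linarith) (by linarith)) (mul_nonneg (by linarith) (by linarith))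
  unfold crossRatio
  simp only [sub_zero]
  rw [div_mul_eq_mul_div, div_le_div_iff₀ (by nlinarith) (by nlinarith)]
  calc v * (1 - u) * (1 + (a + (1 - b)) * (v - u)) * ((u - a) * (b - v))
      = v * (u - a) * ((1 - u) * (b - v)) * (1 + (a + (1 - b)) * (v - u)) := by ring
    _ ≤ v * (u - a) * ((1 - u) * (b - v)) * ((1 + a * (v - u)) * (1 + (1 - b) * (v - u))) :=
      mul_le_mul_of_nonneg_left hfactor hw
    _ = (v * (u - a) * (1 + a * (v - u))) * ((1 - u) * (b - v) * (1 + (1 - b) * (v - u))) := by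
      ring
    _ ≤ u * (v - a) * ((1 - v) * (b - u)) :=
      mul_le_mul hleft hright (mul_nonneg (mul_nonneg (by linarith) (by linarith))
        (by nlinarith)) (by nlinarith)
    _ = (v - a) * (b - u) * (u * (1 - v)) := by ring

theorem crossRatio_zero_one_sub_one_mul {u v : ℝ} (hu : 0 < u) (hv : v < 1) :
    (crossRatio 0 1 u v - 1) * (u * (1 - v)) = v - u := by
  unfold crossRatio
  simp only [sub_zero]
  rw [sub_mul, div_mul_cancel₀ _ (by nlinarith)]
  ring

theorem le_div_of_le_crossRatio {a u v R₀ : ℝ} (hR₀ : 1 ≤ R₀) (hR : R₀ ≤ crossRatio 0 1 u v)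
    (hu : 0 < u) (hva : v ≤ a) (ha : a < 1) : u ≤ a / (R₀ * (1 - a) + a) := by
  have hv : v < 1 := hva.trans_lt ha
  have hwidth : (R₀ - 1) * (u * (1 - v)) ≤ v - u :=
    crossRatio_zero_one_sub_one_mul hu hv ▸ mul_le_mul_of_nonneg_right (by linarith) (by nlinarith)
  have : (R₀ - 1) * (u * (1 - a)) ≤ (R₀ - 1) * (u * (1 - v)) :=
    mul_le_mul_of_nonneg_left (by nlinarith) (by linarith)
  rw [le_div_iff₀ (by nlinarith)]
  nlinarith

theorem div_le_of_le_crossRatio {a u v R₀ : ℝ} (hR₀ : 1 ≤ R₀) (hR : R₀ ≤ crossRatio 0 1 u v)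
    (ha : 0 < a) (hau : a ≤ u) (hv : v < 1) : R₀ * a / (R₀ * a + 1 - a) ≤ v := by
  have hu : 0 < u := ha.trans_le hau
  have hwidth : (R₀ - 1) * (u * (1 - v)) ≤ v - u :=
    crossRatio_zero_one_sub_one_mul hu hv ▸ mul_le_mul_of_nonneg_right (by linarith) (by nlinarith)
  have : (R₀ - 1) * (a * (1 - v)) ≤ (R₀ - 1) * (u * (1 - v)) :=
    mul_le_mul_of_nonneg_left (by nlinarith) (by linarith)
  rw [div_le_iff₀ (by nlinarith)]
  nlinarith

namespace IsMobiusOn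

variable {f g : ℝ → ℝ}

theorem continuousOn (hf : IsMobiusOn f) : ContinuousOn f (Icc 0 1) := by
  obtain ⟨A, B, C, D, -, hf⟩ := hf
  refine ContinuousOn.congr ?_ fun x hx => (hf x hx).2
  exact (by fun_prop : Continuous fun x => A * x + B).continuousOn.div (by fun_prop)
    fun x hx => (hf x hx).1

theorem comp (hf : IsMobiusOn f) (hg : IsMobiusOn g) (hmaps : MapsTo g (Icc 0 1) (Icc 0 1)) :
    IsMobiusOn (f ∘ g) := by
  obtain ⟨A₁, B₁, C₁, D₁, hdet₁, hf⟩ := hf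
  obtain ⟨A₂, B₂, C₂, D₂, hdet₂, hg⟩ := hg
  refine ⟨A₁ * A₂ + B₁ * C₂, A₁ * B₂ + B₁ * D₂, C₁ * A₂ + D₁ * C₂, C₁ * B₂ + D₁ * D₂, ?_, ?_⟩
  · convert mul_ne_zero hdet₁ hdet₂ using 1; ring
  intro x hx
  obtain ⟨hd₂, hgx⟩ := hg x hx
  obtain ⟨hd₁, hfgx⟩ := hf (g x) (hmaps hx)
  have hden : (C₁ * A₂ + D₁ * C₂) * x + (C₁ * B₂ + D₁ * D₂) = (C₁ * g x + D₁) * (C₂ * x + D₂) := by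
    rw [hgx]; field_simp; ring
  have hnum : (A₁ * A₂ + B₁ * C₂) * x + (A₁ * B₂ + B₁ * D₂) = (A₁ * g x + B₁) * (C₂ * x + D₂) := by
    rw [hgx]; field_simp; ring
  rw [hden, hnum, mul_div_mul_right _ _ hd₂]
  exact ⟨mul_ne_zero hd₁ hd₂, hfgx⟩

theorem exists_pos_den (hf : IsMobiusOn f) :
    ∃ A B C : ℝ, ∀ x ∈ Icc (0:ℝ) 1, 0 < C * x + 1 ∧ f x = (A * x + B) / (C * x + 1) := by
  obtain ⟨A, B, C, D, -, hf⟩ := hf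
  have hD : D ≠ 0 := by simpa using (hf 0 (by simp)).1
  refine ⟨A / D, B / D, C / D, fun x hx => ⟨?_, ?_⟩⟩
  · by_contra! hle
    have hx0 : 0 < x := lt_of_le_of_ne hx.1 (by rintro rfl; norm_num at hle)
    -- `z` is the zero of the denominator, which lies in `(0, x]`
    set z := x / (1 - (C / D * x + 1))
    have hz : z ∈ Icc (0:ℝ) 1 := ⟨div_nonneg hx.1 (by linarith),
      (div_le_of_le_mul₀ (by linarith) (by linarith) (by nlinarith)).trans hx.2⟩
    apply (hf z hz).1
    have ht : C / D * x ≠ 0 := by linarith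
    have : C / D * z + 1 = 0 := by
      rw [show C / D * z = C / D * x / -(C / D * x) by simp only [z]; ring, div_neg,
        div_self ht]
      ring
    calc C * z + D = D * (C / D * z + 1) := by field_simp
      _ = 0 := by rw [this, mul_zero]
  · rw [(hf x hx).2]; field_simp

theorem lt_self_of_lt_self (hf : IsMobiusOn f) (h0 : f 0 = 0) (h1 : f 1 < 1) {s x : ℝ}
    (hs : 0 < s) (hfs : f s < s) (hsx : s ≤ x) (hx : x ≤ 1) : f x < x := by
  obtain ⟨A, B, C, hf⟩ := hf.exists_pos_den
  have hB : B = 0 := by simpa [(hf 0 (by simp)).2] using h0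
  -- below the diagonal means `A < C y + 1`, a condition affine in `y`
  have key : ∀ y ∈ Icc (0:ℝ) 1, 0 < y → (f y < y ↔ A < C * y + 1) := by
    intro y hy hy0
    rw [(hf y hy).2, hB, add_zero, div_lt_iff₀ (hf y hy).1]
    constructor <;> intro <;> nlinarith
  have hs' := (key s ⟨hs.le, hsx.trans hx⟩ hs).1 hfs
  have h1' := (key 1 (by simp) one_pos).1 h1
  refine (key x ⟨by linarith, hx⟩ (by linarith)).2 ?_
  rcases le_total 0 C with hC | hC <;> nlinarith

theorem exists_sub_eq (hf : IsMobiusOn f) : ∃ K ≠ 0, ∃ d : ℝ → ℝ, (∀ x ∈ Icc (0:ℝ) 1, d x ≠ 0) ∧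
    ∀ x ∈ Icc (0:ℝ) 1, ∀ y ∈ Icc (0:ℝ) 1, f x - f y = (x - y) * (K / (d x * d y)) := by
  obtain ⟨A, B, C, D, hdet, hf⟩ := hf
  refine ⟨A * D - B * C, hdet, fun t => C * t + D, fun x hx => (hf x hx).1, fun x hx y hy => ?_⟩
  rw [(hf x hx).2, (hf y hy).2, div_sub_div _ _ (hf x hx).1 (hf y hy).1, mul_div_assoc']
  congr 1
  ring

theorem crossRatio_map (hf : IsMobiusOn f) {a b u v : ℝ} (ha : a ∈ Icc (0:ℝ) 1)
    (hb : b ∈ Icc (0:ℝ) 1) (hu : u ∈ Icc (0:ℝ) 1) (hv : v ∈ Icc (0:ℝ) 1) :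
    crossRatio (f a) (f b) (f u) (f v) = crossRatio a b u v := by
  obtain ⟨K, hK, d, hd, hsub⟩ := hf.exists_sub_eq
  unfold crossRatio
  rw [hsub v hv a ha, hsub b hb u hu, hsub u hu a ha, hsub b hb v hv]
  field_simp [hd a ha, hd b hb, hd u hu, hd v hv]

end IsMobiusOn

theorem MonotoneOn.le_iterate_of_le_map {α : Type*} [Preorder α] {h : α → α} {s : Set α}
    (hh : MonotoneOn h s) (hs : MapsTo h s s) {x : α} (hx : x ∈ s) (hle : x ≤ h x) (n : ℕ) :
    x ≤ h^[n] x := by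
  induction n with
  | zero => exact le_rfl
  | succ n ih =>
    rw [Function.iterate_succ_apply']
    exact hle.trans (hh hx (hs.iterate n hx) ih)

theorem IsAttractingFixedPt.exists_lt_self {h : ℝ → ℝ} (hattr : IsAttractingFixedPt h 0)
    (hmono : MonotoneOn h (Icc 0 1)) (hmaps : MapsTo h (Icc 0 1) (Icc 0 1)) :
    ∃ ε > 0, ∀ x ∈ Ioc (0:ℝ) 1, x < ε → h x < x := by
  obtain ⟨-, -, ε, hε, hbasin⟩ := hattr
  refine ⟨ε, hε, fun x hx hxε => ?_⟩
  by_contra! hle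
  have hlim := hbasin x (Ioc_subset_Icc_self hx) (by rwa [sub_zero, abs_of_pos hx.1])
  have : x ≤ 0 := ge_of_tendsto hlim
    (Eventually.of_forall (hmono.le_iterate_of_le_map hmaps (Ioc_subset_Icc_self hx) hle))
  linarith [hx.1]

theorem IsMobiusOn.lt_self_of_isAttractingFixedPt {h : ℝ → ℝ} (hM : IsMobiusOn h)
    (hmono : MonotoneOn h (Icc 0 1)) (hmaps : MapsTo h (Icc 0 1) (Icc 0 1))
    (hattr : IsAttractingFixedPt h 0) (h1 : h 1 < 1) : ∀ x ∈ Ioc (0:ℝ) 1, h x < x := by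
  obtain ⟨ε, hε, hsmall⟩ := hattr.exists_lt_self hmono hmaps
  intro x hx
  have hs : 0 < min x (ε / 2) := lt_min hx.1 (half_pos hε)
  exact hM.lt_self_of_lt_self hattr.2.1 h1 hs
    (hsmall _ ⟨hs, (min_le_left _ _).trans hx.2⟩ ((min_le_right _ _).trans_lt (half_lt_self hε)))
    (min_le_left _ _) hx.2

theorem ContinuousOn.exists_pos_forall_lt {φ : ℝ → ℝ} {s : Set ℝ} (hφ : ContinuousOn φ s)
    {t c : ℝ} (ht : t ∈ s) (hc : φ t < c) : ∃ δ > 0, ∀ x ∈ s, |x - t| < δ → φ x < c := by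
  obtain ⟨δ, hδ, hball⟩ := Metric.mem_nhdsWithin_iff.1 ((hφ t ht).eventually (gt_mem_nhds hc))
  exact ⟨δ, hδ, fun x hx hxt => hball ⟨by rwa [Metric.mem_ball, Real.dist_eq], hx⟩⟩

def semigroupOrbit (f g : ℝ → ℝ) (x : ℝ) : Set ℝ :=
  {y | ∃ w : List Bool, w ≠ [] ∧ y = w.foldr (fun s z => if s then f z else g z) x}

section semigroupOrbit

variable {f g : ℝ → ℝ} {x : ℝ}

theorem semigroupOrbit_comm : semigroupOrbit g f x = semigroupOrbit f g x := by
  have foldr_map_not : ∀ (F G : ℝ → ℝ) (w : List Bool),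
      (w.map not).foldr (fun s z => if s then F z else G z) x
        = w.foldr (fun s z => if s then G z else F z) x := by
    intro F G w
    induction w with
    | nil => rfl
    | cons s w ih => cases s <;> simp [ih]
  ext y
  constructor <;> rintro ⟨w, hw, rfl⟩ <;>
    exact ⟨w.map not, by simpa using hw, (foldr_map_not _ _ w).symm⟩

theorem apply_left_mem_semigroupOrbit {y : ℝ} (hy : y ∈ semigroupOrbit f g x) :
    f y ∈ semigroupOrbit f g x := by
  obtain ⟨w, -, rfl⟩ := hy
  exact ⟨true :: w, List.cons_ne_nil _ _, rfl⟩

theorem apply_right_mem_semigroupOrbit {y : ℝ} (hy : y ∈ semigroupOrbit f g x) :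
    g y ∈ semigroupOrbit f g x := by
  obtain ⟨w, -, rfl⟩ := hy
  exact ⟨false :: w, List.cons_ne_nil _ _, rfl⟩

theorem apply_left_self_mem_semigroupOrbit : f x ∈ semigroupOrbit f g x :=
  ⟨[true], List.cons_ne_nil _ _, rfl⟩

theorem semigroupOrbit_subset {s : Set ℝ} (hf : MapsTo f s s) (hg : MapsTo g s s) (hx : x ∈ s) :
    semigroupOrbit f g x ⊆ s := by
  rintro _ ⟨w, -, rfl⟩
  induction w with
  | nil => exact hx
  | cons b w ih => cases b <;> simp [hf ih, hg ih]

end semigroupOrbit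

-- The theorem in the case `o(f ∘ g) = 0`, which forces `f 1 = 0` and `g 0 = 1`.
structure MobiusPair where
  f : ℝ → ℝ
  g : ℝ → ℝ
  mobius_f : IsMobiusOn f
  mobius_g : IsMobiusOn g
  mapsTo_f : MapsTo f (Icc 0 1) (Icc 0 1)
  mapsTo_g : MapsTo g (Icc 0 1) (Icc 0 1)
  antiOn_f : StrictAntiOn f (Icc 0 1)
  antiOn_g : StrictAntiOn g (Icc 0 1)
  f_one : f 1 = 0
  g_zero : g 0 = 1
  f_zero_lt_one : f 0 < 1
  g_one_pos : 0 < g 1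
  g_one_le_f_zero : g 1 ≤ f 0
  f_g_lt : ∀ x ∈ Ioc (0:ℝ) 1, f (g x) < x

structure Gap (S : Set ℝ) where
  u : ℝ
  v : ℝ
  pos : 0 < u
  lt : u < v
  lt_one : v < 1
  left_mem : u ∈ S
  right_mem : v ∈ S
  le_or_le : ∀ z ∈ S, z ≤ u ∨ v ≤ z

noncomputable def Gap.ratio {S : Set ℝ} (G : Gap S) : ℝ := crossRatio 0 1 G.u G.v

theorem Gap.ratio_sub_one_mul {S : Set ℝ} (G : Gap S) :
    (G.ratio - 1) * (G.u * (1 - G.v)) = G.v - G.u :=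
  crossRatio_zero_one_sub_one_mul G.pos G.lt_one

theorem Gap.one_lt_ratio {S : Set ℝ} (G : Gap S) : 1 < G.ratio := by
  have := G.ratio_sub_one_mul
  have : 0 < G.u * (1 - G.v) := mul_pos G.pos (by linarith [G.lt_one])
  nlinarith [G.lt]

namespace MobiusPair

variable (P : MobiusPair)

-- `1 - f 0` and `g 1` measure how far the images `[0, f 0]` and `[g 1, 1]` fall short of `[0, 1]`.
noncomputable def expansionRate : ℝ := min (1 - P.f 0) (P.g 1)

theorem expansionRate_pos : 0 < P.expansionRate :=
  lt_min (by linarith [P.f_zero_lt_one]) P.g_one_pos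

theorem continuousOn_f : ContinuousOn P.f (Icc 0 1) := P.mobius_f.continuousOn

theorem continuousOn_g : ContinuousOn P.g (Icc 0 1) := P.mobius_g.continuousOn

theorem f_pos {x : ℝ} (hx : x ∈ Ico (0:ℝ) 1) : 0 < P.f x :=
  P.f_one ▸ P.antiOn_f (Ico_subset_Icc_self hx) (by simp) hx.2

theorem g_lt_one {x : ℝ} (hx : x ∈ Ioc (0:ℝ) 1) : P.g x < 1 :=
  P.g_zero ▸ P.antiOn_g (by simp) (Ioc_subset_Icc_self hx) hx.1

theorem f_le_f_zero {x : ℝ} (hx : x ∈ Icc (0:ℝ) 1) : P.f x ≤ P.f 0 :=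
  P.antiOn_f.antitoneOn (by simp) hx hx.1

-- `f ∘ (g ∘ f) = (f ∘ g) ∘ f`, so this is `f_g_lt` at `f x`, transported back by `f`.
theorem lt_g_f {x : ℝ} (hx : x ∈ Ico (0:ℝ) 1) : x < P.g (P.f x) := by
  have hfx : P.f x ∈ Ioc (0:ℝ) 1 := ⟨P.f_pos hx, (P.mapsTo_f (Ico_subset_Icc_self hx)).2⟩
  by_contra! hle
  have := P.antiOn_f.antitoneOn (P.mapsTo_g (P.mapsTo_f (Ico_subset_Icc_self hx)))
    (Ico_subset_Icc_self hx) hle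
  linarith [P.f_g_lt _ hfx]

theorem exists_f_eq {t : ℝ} (ht : t ∈ Ioo 0 (P.f 0)) : ∃ y ∈ Ioo (0:ℝ) 1, P.f y = t :=
  intermediate_value_Ioo' zero_le_one P.continuousOn_f (P.f_one ▸ ht)

theorem exists_g_eq {t : ℝ} (ht : t ∈ Ioo (P.g 1) 1) : ∃ y ∈ Ioo (0:ℝ) 1, P.g y = t :=
  intermediate_value_Ioo' zero_le_one P.continuousOn_g (P.g_zero ▸ ht)

structure IsInvariant (S : Set ℝ) : Prop where
  isClosed : IsClosed S
  subset_Icc : S ⊆ Icc 0 1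
  mapsTo_f : MapsTo P.f S S
  mapsTo_g : MapsTo P.g S S
  nonempty : (S ∩ Ioo 0 1).Nonempty

theorem isInvariant_closure_semigroupOrbit {x : ℝ} (hx : x ∈ Ioo (0:ℝ) 1) :
    P.IsInvariant (closure (semigroupOrbit P.f P.g x)) := by
  have hsub : closure (semigroupOrbit P.f P.g x) ⊆ Icc 0 1 :=
    closure_minimal (semigroupOrbit_subset P.mapsTo_f P.mapsTo_g (Ioo_subset_Icc_self hx))
      isClosed_Icc
  refine ⟨isClosed_closure, hsub, ?_, ?_, ⟨P.f x, subset_closure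
    apply_left_self_mem_semigroupOrbit, P.f_pos (Ioo_subset_Ico_self hx),
    (P.f_le_f_zero (Ioo_subset_Icc_self hx)).trans_lt P.f_zero_lt_one⟩⟩
  · exact MapsTo.closure_of_continuousOn (fun _ => apply_left_mem_semigroupOrbit)
      (P.continuousOn_f.mono hsub)
  · exact MapsTo.closure_of_continuousOn (fun _ => apply_right_mem_semigroupOrbit)
      (P.continuousOn_g.mono hsub)

-- `G'` contains the preimage of `G` under `f` or under `g`.
def Step {S : Set ℝ} (G G' : Gap S) : Prop :=
  (G.v ≤ P.f 0 ∧ G.v ≤ P.f G'.u ∧ P.f G'.v ≤ G.u) ∨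
    (P.f 0 ≤ G.u ∧ G.v ≤ P.g G'.u ∧ P.g G'.v ≤ G.u)

namespace IsInvariant

variable {P} {S : Set ℝ}

theorem exists_mem_lt (hS : P.IsInvariant S) {δ : ℝ} (hδ : 0 < δ) : ∃ s ∈ S, 0 < s ∧ s < δ := by
  set T := S ∩ Ioc 0 1
  have hT : T.Nonempty := hS.nonempty.mono (inter_subset_inter_right _ Ioo_subset_Ioc_self)
  have hbdd : BddBelow T := ⟨0, fun z hz => hz.2.1.le⟩
  -- a positive infimum `m` of `T` would lie in `T`, and then so would `f (g m) < m`
  have hinf : sInf T = 0 := by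
    by_contra hne
    obtain ⟨t, ht⟩ := hT
    have hm : sInf T ∈ Ioc (0:ℝ) 1 :=
      ⟨lt_of_le_of_ne (le_csInf ⟨t, ht⟩ fun z hz => hz.2.1.le) (Ne.symm hne),
        (csInf_le hbdd ht).trans ht.2.2⟩
    have hmS : sInf T ∈ S :=
      hS.isClosed.closure_subset (closure_mono inter_subset_left (csInf_mem_closure ⟨t, ht⟩ hbdd))
    have hgm : P.g (sInf T) ∈ Ico (0:ℝ) 1 :=
      ⟨(P.mapsTo_g (Ioc_subset_Icc_self hm)).1, P.g_lt_one hm⟩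
    have himg : P.f (P.g (sInf T)) ∈ T :=
      ⟨hS.mapsTo_f (hS.mapsTo_g hmS), P.f_pos hgm, (P.mapsTo_f (Ico_subset_Icc_self hgm)).2⟩
    linarith [csInf_le hbdd himg, P.f_g_lt _ hm]
  obtain ⟨s, hsT, hs⟩ := exists_lt_of_csInf_lt hT (hinf ▸ hδ)
  exact ⟨s, hsT.1, hsT.2.1, hs⟩

theorem zero_mem (hS : P.IsInvariant S) : (0:ℝ) ∈ S := by
  refine hS.isClosed.closure_subset (Metric.mem_closure_iff.2 fun ε hε => ?_)
  obtain ⟨s, hs, hs0, hsε⟩ := hS.exists_mem_lt hε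
  exact ⟨s, hs, by rwa [Real.dist_eq, zero_sub, abs_neg, abs_of_pos hs0]⟩

theorem one_mem (hS : P.IsInvariant S) : (1:ℝ) ∈ S :=
  P.g_zero ▸ hS.mapsTo_g hS.zero_mem

theorem exists_mem_gt (hS : P.IsInvariant S) {y : ℝ} (hy : y < 1) : ∃ s ∈ S, y < s ∧ s < 1 := by
  obtain ⟨δ, hδ, hnear⟩ := P.continuousOn_g.neg.exists_pos_forall_lt (t := 0) (c := -y) (by simp)
    (by rw [Pi.neg_apply, P.g_zero]; linarith)
  obtain ⟨s, hs, hs0, hsδ⟩ := hS.exists_mem_lt hδ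
  have hsI := hS.subset_Icc hs
  have := hnear s hsI (by rwa [sub_zero, abs_of_pos hs0])
  rw [Pi.neg_apply] at this
  exact ⟨P.g s, hS.mapsTo_g hs, by linarith, P.g_lt_one ⟨hs0, hsI.2⟩⟩

theorem exists_gap (hS : P.IsInvariant S) {y : ℝ} (hy : y ∈ Ioo (0:ℝ) 1) (hyS : y ∉ S) :
    ∃ G : Gap S, G.u < y ∧ y < G.v := by
  have hbddA : BddAbove (S ∩ Iic y) := ⟨y, fun _ hz => hz.2⟩
  have hbddB : BddBelow (S ∩ Ici y) := ⟨y, fun _ hz => hz.2⟩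
  obtain ⟨huS, huy⟩ :=
    (hS.isClosed.inter isClosed_Iic).csSup_mem ⟨0, hS.zero_mem, hy.1.le⟩ hbddA
  obtain ⟨hvS, hyv⟩ :=
    (hS.isClosed.inter isClosed_Ici).csInf_mem ⟨1, hS.one_mem, hy.2.le⟩ hbddB
  have huy' : sSup (S ∩ Iic y) < y := lt_of_le_of_ne huy fun h => hyS (h ▸ huS)
  have hyv' : y < sInf (S ∩ Ici y) := lt_of_le_of_ne hyv fun h => hyS (h ▸ hvS)
  obtain ⟨s, hs, hs0, hsy⟩ := hS.exists_mem_lt hy.1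
  obtain ⟨t, ht, hyt, ht1⟩ := hS.exists_mem_gt hy.2
  refine ⟨⟨sSup (S ∩ Iic y), sInf (S ∩ Ici y), hs0.trans_le (le_csSup hbddA ⟨hs, hsy.le⟩),
    huy'.trans hyv', (csInf_le hbddB ⟨ht, hyt.le⟩).trans_lt ht1, huS, hvS, fun z hz => ?_⟩,
    huy', hyv'⟩
  rcases le_total z y with hzy | hzy
  · exact Or.inl (le_csSup hbddA ⟨hz, hzy⟩)
  · exact Or.inr (csInf_le hbddB ⟨hz, hzy⟩)

theorem exists_gap_pullback (hS : P.IsInvariant S) {φ : ℝ → ℝ} (hφ : StrictAntiOn φ (Icc 0 1))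
    (hφS : MapsTo φ S S) (G : Gap S) {y : ℝ} (hy : y ∈ Ioo (0:ℝ) 1)
    (hφy : φ y ∈ Ioo G.u G.v) : ∃ G' : Gap S, G.v ≤ φ G'.u ∧ φ G'.v ≤ G.u := by
  have hfree : ∀ z ∈ S, φ z ∉ Ioo G.u G.v := fun z hz hzI =>
    (G.le_or_le _ (hφS hz)).elim (fun h => by linarith [hzI.1]) (fun h => by linarith [hzI.2])
  obtain ⟨G', hu', hv'⟩ := hS.exists_gap hy fun hyS => hfree y hyS hφy
  have hyI := Ioo_subset_Icc_self hy
  refine ⟨G', ?_, ?_⟩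
  · by_contra! h
    exact hfree _ G'.left_mem ⟨hφy.1.trans (hφ (hS.subset_Icc G'.left_mem) hyI hu'), h⟩
  · by_contra! h
    exact hfree _ G'.right_mem ⟨h, (hφ hyI (hS.subset_Icc G'.right_mem) hv').trans hφy.2⟩

theorem f_g_right_le (hS : P.IsInvariant S) (G : Gap S) : P.f (P.g G.v) ≤ G.u :=
  (G.le_or_le _ (hS.mapsTo_f (hS.mapsTo_g G.right_mem))).resolve_right
    (not_le.2 (P.f_g_lt _ ⟨G.pos.trans G.lt, G.lt_one.le⟩))

theorem right_le_g_f_left (hS : P.IsInvariant S) (G : Gap S) : G.v ≤ P.g (P.f G.u) :=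
  (G.le_or_le _ (hS.mapsTo_g (hS.mapsTo_f G.left_mem))).resolve_left
    (not_le.2 (P.lt_g_f ⟨G.pos.le, G.lt.trans G.lt_one⟩))

theorem exists_step (hS : P.IsInvariant S) (G : Gap S) :
    ∃ G' : Gap S, P.Step G G' := by
  have hmid : (G.u + G.v) / 2 ∈ Ioo G.u G.v := ⟨by linarith [G.lt], by linarith [G.lt]⟩
  rcases G.le_or_le _ (hS.mapsTo_f hS.zero_mem) with hu | hv
  · obtain ⟨y, hy, hgy⟩ := P.exists_g_eq
      ⟨P.g_one_le_f_zero.trans_lt (hu.trans_lt hmid.1), hmid.2.trans G.lt_one⟩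
    obtain ⟨G', h⟩ := hS.exists_gap_pullback P.antiOn_g hS.mapsTo_g G hy (hgy ▸ hmid)
    exact ⟨G', Or.inr ⟨hu, h⟩⟩
  · obtain ⟨y, hy, hfy⟩ := P.exists_f_eq ⟨G.pos.trans hmid.1, hmid.2.trans_le hv⟩
    obtain ⟨G', h⟩ := hS.exists_gap_pullback P.antiOn_f hS.mapsTo_f G hy (hfy ▸ hmid)
    exact ⟨G', Or.inl ⟨hv, h⟩⟩

theorem ratio_add_le_of_step (hS : P.IsInvariant S) {G G' : Gap S} (h : P.Step G G') :
    G.ratio + P.expansionRate * (G.v - G.u) ≤ G'.ratio := by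
  have hu' := hS.subset_Icc G'.left_mem
  have hv' := hS.subset_Icc G'.right_mem
  have hbase : ∀ c ≥ P.expansionRate,
      G.ratio + P.expansionRate * (G.v - G.u) ≤ G.ratio * (1 + c * (G.v - G.u)) := fun c hc => by
    have := mul_le_mul_of_nonneg_right hc (sub_nonneg.2 G.lt.le)
    nlinarith [G.one_lt_ratio, mul_pos P.expansionRate_pos (sub_pos.2 G.lt)]
  rcases h with ⟨-, hvf, hfu⟩ | ⟨-, hvg, hgu⟩
  · have hfv' : 0 < P.f G'.v := P.f_pos ⟨hv'.1, G'.lt_one⟩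
    have hfu' : P.f G'.u < P.f 0 := P.antiOn_f (by simp) hu' G'.pos
    have hmap := P.mobius_f.crossRatio_map (a := 0) (b := 1) (by simp) (by simp) hu' hv'
    rw [P.f_one] at hmap
    calc G.ratio + P.expansionRate * (G.v - G.u)
        ≤ G.ratio * (1 + (0 + (1 - P.f 0)) * (G.v - G.u)) :=
          hbase _ ((min_le_left _ _).trans (zero_add _).ge)
      _ ≤ crossRatio 0 (P.f 0) G.u G.v :=
          crossRatio_zero_one_mul_le le_rfl G.pos G.lt (hvf.trans_lt hfu') P.f_zero_lt_one.le
      _ ≤ crossRatio 0 (P.f 0) (P.f G'.v) (P.f G'.u) :=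
          crossRatio_le_crossRatio hfv' hfu G.lt hvf hfu'
      _ = G'.ratio := by rw [crossRatio_comm]; exact hmap
  · have hgv' : P.g 1 < P.g G'.v := P.antiOn_g hv' (by simp) G'.lt_one
    have hgu' : P.g G'.u < 1 := P.g_lt_one ⟨G'.pos, hu'.2⟩
    have hmap := P.mobius_g.crossRatio_map (a := 0) (b := 1) (by simp) (by simp) hu' hv'
    rw [P.g_zero] at hmap
    calc G.ratio + P.expansionRate * (G.v - G.u)
        ≤ G.ratio * (1 + (P.g 1 + (1 - 1)) * (G.v - G.u)) :=
          hbase _ ((min_le_right _ _).trans (by rw [sub_self, add_zero]))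
      _ ≤ crossRatio (P.g 1) 1 G.u G.v :=
          crossRatio_zero_one_mul_le P.g_one_pos.le (hgv'.trans_le hgu) G.lt
            (hvg.trans_lt hgu') le_rfl
      _ ≤ crossRatio (P.g 1) 1 (P.g G'.v) (P.g G'.u) :=
          crossRatio_le_crossRatio hgv' hgu G.lt hvg hgu'
      _ = G'.ratio := by rw [crossRatio_comm]; exact hmap

end IsInvariant

variable {S : Set ℝ}

theorem ratio_zero_le_of_chain (hS : P.IsInvariant S) {G : ℕ → Gap S}
    (hG : ∀ n, P.Step (G n) (G (n + 1))) (n : ℕ) : (G 0).ratio ≤ (G n).ratio := by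
  induction n with
  | zero => exact le_rfl
  | succ n ih =>
    have := mul_pos P.expansionRate_pos (sub_pos.2 (G n).lt)
    linarith [hS.ratio_add_le_of_step (hG n)]

theorem exists_lt_forall_left_le_of_chain (hS : P.IsInvariant S) {G : ℕ → Gap S}
    (hG : ∀ n, P.Step (G n) (G (n + 1))) :
    ∃ lo < P.f 0, ∀ n, (G n).v ≤ P.f 0 → (G n).u ≤ lo := by
  have hR₀ := (G 0).one_lt_ratio
  have ha := P.f_pos (x := 0) (by simp)
  refine ⟨P.f 0 / ((G 0).ratio * (1 - P.f 0) + P.f 0), ?_, fun n hva =>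
    le_div_of_le_crossRatio hR₀.le (P.ratio_zero_le_of_chain hS hG n) (G n).pos hva
      P.f_zero_lt_one⟩
  rw [div_lt_iff₀ (by nlinarith [P.f_zero_lt_one])]
  nlinarith [mul_pos ha (mul_pos (sub_pos.2 hR₀) (sub_pos.2 P.f_zero_lt_one))]

theorem exists_gt_forall_le_right_of_chain (hS : P.IsInvariant S) {G : ℕ → Gap S}
    (hG : ∀ n, P.Step (G n) (G (n + 1))) :
    ∃ hi > P.f 0, ∀ n, P.f 0 ≤ (G n).u → hi ≤ (G n).v := by
  have hR₀ := (G 0).one_lt_ratio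
  have ha := P.f_pos (x := 0) (by simp)
  refine ⟨(G 0).ratio * P.f 0 / ((G 0).ratio * P.f 0 + 1 - P.f 0), ?_, fun n hau =>
    div_le_of_le_crossRatio hR₀.le (P.ratio_zero_le_of_chain hS hG n) ha hau (G n).lt_one⟩
  rw [gt_iff_lt, lt_div_iff₀ (by nlinarith [P.f_zero_lt_one])]
  nlinarith [mul_pos ha (mul_pos (sub_pos.2 hR₀) (sub_pos.2 P.f_zero_lt_one))]

theorem exists_pos_forall_le_right_of_chain (hS : P.IsInvariant S) {G : ℕ → Gap S}
    (hG : ∀ n, P.Step (G n) (G (n + 1))) : ∃ ρ > 0, ∀ n, ρ ≤ (G n).v := by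
  have hI : ∀ n, (G n).u ∈ Icc (0:ℝ) 1 ∧ (G n).v ∈ Icc (0:ℝ) 1 := fun n =>
    ⟨hS.subset_Icc (G n).left_mem, hS.subset_Icc (G n).right_mem⟩
  obtain ⟨lo, hlo, hlo_n⟩ := P.exists_lt_forall_left_le_of_chain hS hG
  obtain ⟨hi, hhi, hhi_n⟩ := P.exists_gt_forall_le_right_of_chain hS hG
  obtain ⟨δ₁, hδ₁, hf⟩ := P.continuousOn_f.neg.exists_pos_forall_lt (t := 0) (c := -lo)
    (by simp) (by rw [Pi.neg_apply]; linarith)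
  obtain ⟨δ₂, hδ₂, hgg⟩ := (P.continuousOn_g.comp P.continuousOn_g P.mapsTo_g).exists_pos_forall_lt
    (t := 0) (c := hi) (by simp)
    (by simpa only [Function.comp_apply, P.g_zero] using P.g_one_le_f_zero.trans_lt hhi)
  have near_zero : ∀ {δ x : ℝ}, x ∈ Icc (0:ℝ) 1 → x < δ → |x - 0| < δ := fun hx hxδ => by
    rwa [sub_zero, abs_of_nonneg hx.1]
  set ρ := min (min (G 0).v (G 1).v) (min δ₁ δ₂)
  refine ⟨ρ, lt_min (lt_min ((G 0).pos.trans (G 0).lt) ((G 1).pos.trans (G 1).lt))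
    (lt_min hδ₁ hδ₂), fun n => ?_⟩
  -- two steps back suffice: after an `f`-step the next `g`-step moves `v` up, since `f ∘ g < id`
  suffices h : ∀ n, ρ ≤ (G n).v ∧ ρ ≤ (G (n + 1)).v from (h n).1
  intro n
  induction n with
  | zero => exact ⟨(min_le_left _ _).trans (min_le_left _ _),
      (min_le_left _ _).trans (min_le_right _ _)⟩
  | succ n ih =>
    refine ⟨ih.2, ?_⟩
    have hgvI := P.mapsTo_g (hI (n + 2)).2
    rcases hG (n + 1) with ⟨hva, -, hfv⟩ | ⟨-, -, hgv_le⟩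
    · refine (min_le_right _ _).trans ((min_le_left _ _).trans (not_lt.1 fun hlt => ?_))
      have := hf _ (hI (n + 2)).2 (near_zero (hI (n + 2)).2 hlt)
      rw [Pi.neg_apply] at this
      linarith [hlo_n (n + 1) hva]
    rcases hG n with ⟨-, hvf, -⟩ | ⟨hau, hvg, -⟩
    · have := P.antiOn_f.antitoneOn hgvI (hI (n + 1)).1 hgv_le
      linarith [ih.1, P.f_g_lt _ ⟨(G (n + 2)).pos.trans (G (n + 2)).lt, (hI (n + 2)).2.2⟩]
    · refine (min_le_right _ _).trans ((min_le_right _ _).trans (not_lt.1 fun hlt => ?_))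
      have := P.antiOn_g.antitoneOn hgvI (hI (n + 1)).1 hgv_le
      have := hgg _ (hI (n + 2)).2 (near_zero (hI (n + 2)).2 hlt)
      simp only [Function.comp_apply] at this
      linarith [hhi_n n hau]

theorem exists_lt_one_forall_left_le_of_chain (hS : P.IsInvariant S) {G : ℕ → Gap S}
    (hG : ∀ n, P.Step (G n) (G (n + 1))) : ∃ β < 1, ∀ n, (G n).u ≤ β := by
  obtain ⟨ρ, hρ, hρ_n⟩ := P.exists_pos_forall_le_right_of_chain hS hG
  obtain ⟨hi, hhi, hhi_n⟩ := P.exists_gt_forall_le_right_of_chain hS hG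
  obtain ⟨δ₁, hδ₁, hf⟩ := P.continuousOn_f.exists_pos_forall_lt (t := 1) (c := ρ) (by simp)
    (by rwa [P.f_one])
  obtain ⟨δ₂, hδ₂, hg⟩ := P.continuousOn_g.exists_pos_forall_lt (t := 1) (c := hi) (by simp)
    (P.g_one_le_f_zero.trans_lt hhi)
  have near_one : ∀ {δ x : ℝ}, x ∈ Icc (0:ℝ) 1 → 1 - δ < x → |x - 1| < δ := fun hx hxδ => by
    rw [abs_sub_comm, abs_of_nonneg (sub_nonneg.2 hx.2)]; linarith
  refine ⟨max (G 0).u (1 - min δ₁ δ₂), max_lt ((G 0).lt.trans (G 0).lt_one)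
    (by linarith [lt_min hδ₁ hδ₂]), fun n => ?_⟩
  cases n with
  | zero => exact le_max_left _ _
  | succ n =>
    refine le_max_of_le_right (not_lt.1 fun hlt => ?_)
    have hu := hS.subset_Icc (G (n + 1)).left_mem
    rcases hG n with ⟨-, hvf, -⟩ | ⟨hau, hvg, -⟩
    · have := hf _ hu (near_one hu (by linarith [min_le_left δ₁ δ₂]))
      linarith [hρ_n n]
    · have := hg _ hu (near_one hu (by linarith [min_le_right δ₁ δ₂]))
      linarith [hhi_n n hau]

theorem exists_bounds_of_chain (hS : P.IsInvariant S) {G : ℕ → Gap S}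
    (hG : ∀ n, P.Step (G n) (G (n + 1))) :
    ∃ α > 0, ∃ β < 1, ∀ n, α ≤ (G n).u ∧ (G n).v ≤ β := by
  obtain ⟨ρ, hρ, hρ_n⟩ := P.exists_pos_forall_le_right_of_chain hS hG
  obtain ⟨β, hβ, hβ_n⟩ := P.exists_lt_one_forall_left_le_of_chain hS hG
  have hρI : ρ ∈ Ioc (0:ℝ) 1 := ⟨hρ, (hρ_n 0).trans (G 0).lt_one.le⟩
  have hβI : β ∈ Ico (0:ℝ) 1 := ⟨(G 0).pos.le.trans (hβ_n 0), hβ⟩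
  have hgρ := P.mapsTo_g (Ioc_subset_Icc_self hρI)
  have hfβ := P.mapsTo_f (Ico_subset_Icc_self hβI)
  refine ⟨P.f (P.g ρ), P.f_pos ⟨hgρ.1, P.g_lt_one hρI⟩,
    P.g (P.f β), P.g_lt_one ⟨P.f_pos hβI, hfβ.2⟩, fun n => ⟨?_, ?_⟩⟩
  · have hv := hS.subset_Icc (G n).right_mem
    calc P.f (P.g ρ)
        ≤ P.f (P.g (G n).v) := P.antiOn_f.antitoneOn (P.mapsTo_g hv) hgρ
          (P.antiOn_g.antitoneOn (Ioc_subset_Icc_self hρI) hv (hρ_n n))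
      _ ≤ (G n).u := hS.f_g_right_le (G n)
  · have hu := hS.subset_Icc (G n).left_mem
    calc (G n).v
        ≤ P.g (P.f (G n).u) := hS.right_le_g_f_left (G n)
      _ ≤ P.g (P.f β) := P.antiOn_g.antitoneOn hfβ (P.mapsTo_f hu)
          (P.antiOn_f.antitoneOn hu (Ico_subset_Icc_self hβI) (hβ_n n))

-- Confined to `[α, β]`, the gaps keep a width `ε`, so their ratios grow without bound.
theorem false_of_chain (hS : P.IsInvariant S) {G : ℕ → Gap S}
    (hG : ∀ n, P.Step (G n) (G (n + 1))) : False := by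
  obtain ⟨α, hα, β, hβ, hbound⟩ := P.exists_bounds_of_chain hS hG
  have hR₀ := (G 0).one_lt_ratio
  have hαβ : 0 < α * (1 - β) := mul_pos hα (sub_pos.2 hβ)
  set ε := ((G 0).ratio - 1) * (α * (1 - β))
  have hε : 0 < ε := mul_pos (sub_pos.2 hR₀) hαβ
  have hwidth : ∀ n, ((G n).ratio - 1) * (α * (1 - β)) ≤ (G n).v - (G n).u := fun n => by
    rw [← (G n).ratio_sub_one_mul]
    exact mul_le_mul_of_nonneg_left (mul_le_mul (hbound n).1 (by linarith [(hbound n).2])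
      (by linarith) (G n).pos.le) (by linarith [(G n).one_lt_ratio])
  have hgrow : ∀ n : ℕ, (G 0).ratio + n * (P.expansionRate * ε) ≤ (G n).ratio := by
    intro n
    induction n with
    | zero => simp
    | succ n ih =>
      have hcn := mul_nonneg (Nat.cast_nonneg (α := ℝ) n) (mul_pos P.expansionRate_pos hε).le
      have hε_n : ε ≤ (G n).v - (G n).u :=
        (mul_le_mul_of_nonneg_right (by linarith) hαβ.le).trans (hwidth n)
      have := mul_le_mul_of_nonneg_left hε_n P.expansionRate_pos.le
      push_cast
      linarith [hS.ratio_add_le_of_step (hG n)]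
  obtain ⟨n, hn⟩ := exists_nat_gt (1 / (P.expansionRate * ε * (α * (1 - β))))
  rw [div_lt_iff₀ (mul_pos (mul_pos P.expansionRate_pos hε) hαβ)] at hn
  have := mul_le_mul_of_nonneg_right (hgrow n) hαβ.le
  nlinarith [hwidth n, (G n).lt_one, (G n).pos]

theorem IsInvariant.Icc_subset (hS : P.IsInvariant S) : Icc 0 1 ⊆ S := by
  intro y hy
  by_contra hyS
  have hy' : y ∈ Ioo (0:ℝ) 1 := ⟨lt_of_le_of_ne hy.1 fun h => hyS (h ▸ hS.zero_mem),
    lt_of_le_of_ne hy.2 fun h => hyS (h ▸ hS.one_mem)⟩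
  obtain ⟨G₀, -⟩ := hS.exists_gap hy' hyS
  choose next hnext using hS.exists_step
  exact P.false_of_chain hS (G := fun n => next^[n] G₀) fun n => by
    simp only [Function.iterate_succ_apply']
    exact hnext _

end MobiusPair

theorem image_Icc_eq_Icc {φ : ℝ → ℝ} (hφ : ContinuousOn φ (Icc 0 1))
    (hmaps : MapsTo φ (Icc 0 1) (Icc 0 1)) (h0 : φ 0 = 1) (h1 : φ 1 = 0) :
    φ '' Icc 0 1 = Icc 0 1 :=
  (image_subset_iff.2 hmaps).antisymm <| by
    simpa [h0, h1] using intermediate_value_Icc' zero_le_one hφ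

theorem Icc_subset_closure_semigroupOrbit (f g : ℝ → ℝ) (hfM : IsMobiusOn f)
    (hgM : IsMobiusOn g) (hfmaps : MapsTo f (Icc 0 1) (Icc 0 1))
    (hgmaps : MapsTo g (Icc 0 1) (Icc 0 1)) (hfanti : StrictAntiOn f (Icc 0 1))
    (hganti : StrictAntiOn g (Icc 0 1)) (hfnotonto : f '' Icc 0 1 ≠ Icc 0 1)
    (hgnotonto : g '' Icc 0 1 ≠ Icc 0 1) (hcover : f '' Icc 0 1 ∪ g '' Icc 0 1 = Icc 0 1)
    (hattr : IsAttractingFixedPt (f ∘ g) 0) {x : ℝ} (hx : x ∈ Ioo (0:ℝ) 1) :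
    Icc 0 1 ⊆ closure (semigroupOrbit f g x) := by
  have hI0 : (0:ℝ) ∈ Icc (0:ℝ) 1 := by simp
  have hI1 : (1:ℝ) ∈ Icc (0:ℝ) 1 := by simp
  have hg0 : g 0 = 1 := by
    refine le_antisymm (hgmaps hI0).2 (not_lt.1 fun hlt => ?_)
    have := hfanti (hgmaps hI0) hI1 hlt
    rw [show f (g 0) = 0 from hattr.2.1] at this
    linarith [(hfmaps hI1).1]
  have hf1 : f 1 = 0 := hg0 ▸ hattr.2.1
  have hf0 : f 0 < 1 := lt_of_le_of_ne (hfmaps hI0).2 fun h =>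
    hfnotonto (image_Icc_eq_Icc hfM.continuousOn hfmaps h hf1)
  have hg1 : 0 < g 1 := lt_of_le_of_ne (hgmaps hI1).1 fun h =>
    hgnotonto (image_Icc_eq_Icc hgM.continuousOn hgmaps hg0 h.symm)
  have hgf : g 1 ≤ f 0 := by
    by_contra! hlt
    have hmid : (f 0 + g 1) / 2 ∈ Icc (0:ℝ) 1 :=
      ⟨by linarith [(hfmaps hI0).1], by linarith [(hgmaps hI1).2]⟩
    rw [← hcover] at hmid
    rcases hmid with ⟨z, hz, hfz⟩ | ⟨z, hz, hgz⟩
    · linarith [hfanti.antitoneOn hI0 hz hz.1]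
    · linarith [hganti.antitoneOn hz hI1 hz.2]
  have hfg : ∀ y ∈ Ioc (0:ℝ) 1, f (g y) < y :=
    (hfM.comp hgM hgmaps).lt_self_of_isAttractingFixedPt
      (fun y hy z hz hyz => hfanti.antitoneOn (hgmaps hz) (hgmaps hy)
        (hganti.antitoneOn hy hz hyz))
      (hfmaps.comp hgmaps) hattr
      ((hfanti.antitoneOn hI0 (hgmaps hI1) (hgmaps hI1).1).trans_lt hf0)
  let P : MobiusPair :=
    ⟨f, g, hfM, hgM, hfmaps, hgmaps, hfanti, hganti, hf1, hg0, hf0, hg1, hgf, hfg⟩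
  exact (P.isInvariant_closure_semigroupOrbit hx).Icc_subset

/-- decreasing, non-onto Möbius self-maps of [0,1] whose images cover
[0,1] and whose compositions have attracting fixed points {0,1} have all orbits
dense. -/
theorem stmt_18 (f g : ℝ → ℝ)
    (hfM : IsMobiusOn f) (hgM : IsMobiusOn g)
    (hfmaps : Set.MapsTo f (Set.Icc 0 1) (Set.Icc 0 1))
    (hgmaps : Set.MapsTo g (Set.Icc 0 1) (Set.Icc 0 1))
    (hfanti : StrictAntiOn f (Set.Icc 0 1)) (hganti : StrictAntiOn g (Set.Icc 0 1))
    (hfnotonto : f '' Set.Icc 0 1 ≠ Set.Icc 0 1)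
    (hgnotonto : g '' Set.Icc 0 1 ≠ Set.Icc 0 1)
    (hcover : (f '' Set.Icc 0 1) ∪ (g '' Set.Icc 0 1) = Set.Icc 0 1)
    (θ₁ θ₂ : ℝ)
    (h₁ : IsAttractingFixedPt (f ∘ g) θ₁) (h₂ : IsAttractingFixedPt (g ∘ f) θ₂)
    (hθ : ({θ₁, θ₂} : Set ℝ) = {0, 1}) :
    ∀ x ∈ Set.Ioo (0:ℝ) 1, Set.Icc (0:ℝ) 1 ⊆
      closure {y | ∃ w : List Bool, w ≠ [] ∧
        y = w.foldr (fun s z => if s then f z else g z) x} := by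
  intro x hx
  change Icc 0 1 ⊆ closure (semigroupOrbit f g x)
  have h0 : (0:ℝ) ∈ ({θ₁, θ₂} : Set ℝ) := hθ ▸ mem_insert 0 {1}
  rcases h0 with rfl | rfl
  · exact Icc_subset_closure_semigroupOrbit f g hfM hgM hfmaps hgmaps hfanti hganti hfnotonto
      hgnotonto hcover h₁ hx
  · rw [← semigroupOrbit_comm]
    exact Icc_subset_closure_semigroupOrbit g f hgM hfM hgmaps hfmaps hganti hfanti hgnotonto
      hfnotonto (union_comm _ _ ▸ hcover) h₂ hx
end

section
/- Let f(x) = x + 1 and g(x) = 1/x on (0,∞). The orbit of 1 under the semigroup generated by f and g equals the set of all positive rational numbers; in particular, the orbit of 1 is dense in (0,∞). -/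
/-!
Every word in `x ↦ x + 1` and `x ↦ 1 / x` maps positive rationals to positive rationals.
Conversely, `a / b` is reached from `1` by running the subtractive Euclidean algorithm
backwards: `a / b = (a - b) / b + 1` if `b < a`, and `a / b = 1 / ((b - a) / a + 1)` if
`a < b`, each step lowering `a + b`. Density then follows from density of `ℚ` in `ℝ`.
-/

/-- `true` acts as `x ↦ x + 1` and `false` as `x ↦ 1 / x`; the last letter acts first. -/
def evalWord {K : Type*} [DivisionRing K] (w : List Bool) (x : K) : K :=
  w.foldr (fun s z => if s then z + 1 else 1 / z) x

@[simp]
lemma evalWord_nil {K : Type*} [DivisionRing K] (x : K) : evalWord [] x = x := rfl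

@[simp]
lemma evalWord_cons_true {K : Type*} [DivisionRing K] (w : List Bool) (x : K) :
    evalWord (true :: w) x = evalWord w x + 1 := rfl

@[simp]
lemma evalWord_cons_false {K : Type*} [DivisionRing K] (w : List Bool) (x : K) :
    evalWord (false :: w) x = 1 / evalWord w x := rfl

lemma map_evalWord {K L : Type*} [DivisionRing K] [DivisionRing L] (f : K →+* L)
    (w : List Bool) (x : K) : f (evalWord w x) = evalWord w (f x) := by
  induction w with
  | nil => rfl
  | cons s w ih => cases s <;> simp [ih]

lemma evalWord_pos {K : Type*} [Field K] [LinearOrder K] [IsStrictOrderedRing K]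
    (w : List Bool) {x : K} (hx : 0 < x) : 0 < evalWord w x := by
  induction w with
  | nil => exact hx
  | cons s w ih => cases s <;> simp only [evalWord_cons_true, evalWord_cons_false] <;> positivity

lemma exists_evalWord_one_eq_div (a b : ℕ) (ha : 0 < a) (hb : 0 < b) :
    ∃ w, evalWord w (1 : ℚ) = a / b := by
  rcases lt_trichotomy a b with hab | rfl | hba
  · obtain ⟨w, hw⟩ := exists_evalWord_one_eq_div (b - a) a (by omega) ha
    refine ⟨false :: true :: w, ?_⟩
    rw [evalWord_cons_false, evalWord_cons_true, hw, Nat.cast_sub hab.le,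
      div_add_one (by positivity), sub_add_cancel, one_div_div]
  · exact ⟨[], by simp [ha.ne']⟩
  · obtain ⟨w, hw⟩ := exists_evalWord_one_eq_div (a - b) b (by omega) hb
    refine ⟨true :: w, ?_⟩
    rw [evalWord_cons_true, hw, Nat.cast_sub hba.le, div_add_one (by positivity),
      sub_add_cancel]
termination_by a + b

lemma exists_evalWord_one_eq_iff {q : ℚ} : (∃ w, evalWord w 1 = q) ↔ 0 < q := by
  refine ⟨fun ⟨w, hw⟩ => hw ▸ evalWord_pos w one_pos, fun hq => ?_⟩
  obtain ⟨w, hw⟩ := exists_evalWord_one_eq_div q.num.natAbs q.den (by simpa using hq.ne') q.pos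
  refine ⟨w, ?_⟩
  rw [hw, Nat.cast_natAbs, abs_of_pos (Rat.num_pos.mpr hq), Rat.num_div_den]

lemma setOf_exists_evalWord_one_eq :
    {y : ℝ | ∃ w, y = evalWord w 1} = {y : ℝ | ∃ q : ℚ, 0 < q ∧ y = (q : ℝ)} := by
  ext y
  constructor
  · rintro ⟨w, rfl⟩
    refine ⟨evalWord w 1, exists_evalWord_one_eq_iff.mp ⟨w, rfl⟩, ?_⟩
    simpa using (map_evalWord (Rat.castHom ℝ) w 1).symm
  · rintro ⟨q, hq, rfl⟩
    obtain ⟨w, hw⟩ := exists_evalWord_one_eq_iff.mpr hq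
    refine ⟨w, ?_⟩
    simpa [hw] using map_evalWord (Rat.castHom ℝ) w 1

lemma Ioi_zero_subset_closure_setOf_pos_ratCast :
    Set.Ioi (0 : ℝ) ⊆ closure {y : ℝ | ∃ q : ℚ, 0 < q ∧ y = (q : ℝ)} := by
  refine (Rat.denseRange_cast.open_subset_closure_inter isOpen_Ioi).trans (closure_mono ?_)
  rintro _ ⟨hy, q, rfl⟩
  exact ⟨q, Rat.cast_pos.mp (Set.mem_Ioi.mp hy), rfl⟩

/-- the orbit of 1 under the semigroup generated by x ↦ x + 1 and
x ↦ 1/x (together with 1 itself) is exactly the set of positive rationals, and in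
particular is dense in (0,∞). -/
theorem stmt_19 :
    {y : ℝ | ∃ w : List Bool,
        y = w.foldr (fun s z => if s then z + 1 else 1 / z) 1} =
      {y : ℝ | ∃ q : ℚ, 0 < q ∧ y = (q : ℝ)} ∧
    Set.Ioi (0:ℝ) ⊆ closure {y : ℝ | ∃ w : List Bool,
        y = w.foldr (fun s z => if s then z + 1 else 1 / z) 1} := by
  have horbit := setOf_exists_evalWord_one_eq
  simp only [evalWord] at horbit
  exact ⟨horbit, horbit ▸ Ioi_zero_subset_closure_setOf_pos_ratCast⟩
end
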